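/- arXiv:2301.08328 — 4 statements merged into one kernel-verified Lean document; each statement's English description precedes it below -/
import Mathlib

section
/- For a simple random walk S_n = X_1 + ... + X_n where each X_i is +1 with probability p and -1 with probability 1-p (independently), let T^{|k|} be the first time the walk hits +k or -k. Then for any positive integer k and any n, the tail probability P(T^{|k|} > n) is monotonically increasing in p for 0 ≤ p ≤ 1/2 and monotonically decreasing in p for 1/2 ≤ p ≤ 1. -/
open scoped Classical
noncomputable section

/-- Position of the simple random walk after `m` steps, given the first `n` steps
(`true` = step `+1`, `false` = step `-1`). -/
def walkPos {n : ℕ} (x : Fin n → Bool) (m : ℕ) : ℤ :=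
  ∑ i : Fin n, if (i : ℕ) < m then (if x i then (1 : ℤ) else -1) else 0

/-- Probability weight of a finite path of ±1 steps with up-probability `p`. -/
def walkWt {n : ℕ} (p : ℝ) (x : Fin n → Bool) : ℝ :=
  ∏ i : Fin n, if x i then p else 1 - p

/-- `P(T^{|k|} > n)`: the probability that the walk started at 0 stays strictly
inside `(-k, k)` through time `n`. -/
def tailT (p : ℝ) (k n : ℕ) : ℝ :=
  ∑ x : Fin n → Bool, if (∀ m ≤ n, |walkPos x m| < (k : ℤ)) then walkWt p x else 0

/-!
By the reflection `p ↦ 1 - p` it suffices to treat `p ≤ q ≤ 1/2`. The exit time has law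
`P(T = m + 1) = c_m (p(1-p))^⌊(m+1-k)/2⌋ (p^k + (1-p)^k)` with `c_m` independent of `p`, so
since `p(1-p) ≤ q(1-q)` the ratio `P_q(T = m + 1) / P_p(T = m + 1)` is nondecreasing in `m`:
once `P_q(T = ·)` exceeds `P_p(T = ·)` it stays above. As `T` is finite almost surely (a run of
`2k - 1` up-steps always exits), such a single crossing of two probability laws puts more of
the mass of `P_q` on the tail `{T > n}`.
-/

open Finset Filter Topology

def Survives {n : ℕ} (k t : ℕ) (x : Fin n → Bool) : Prop :=
  ∀ m ≤ t, |walkPos x m| < (k : ℤ)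

lemma tailT_eq (p : ℝ) (k n : ℕ) :
    tailT p k n = ∑ x : Fin n → Bool, if Survives k n x then walkWt p x else 0 :=
  sum_congr rfl fun _ _ => if_congr Iff.rfl rfl rfl

def upCount {n : ℕ} (x : Fin n → Bool) : ℕ := #{i | x i = true}

lemma upCount_le {n : ℕ} (x : Fin n → Bool) : upCount x ≤ n :=
  (card_filter_le _ _).trans_eq (card_fin n)

lemma walkWt_eq_pow_mul_pow {n : ℕ} (p : ℝ) (x : Fin n → Bool) :
    walkWt p x = p ^ upCount x * (1 - p) ^ (n - upCount x) := by
  have hdown : #{i | ¬x i = true} = n - upCount x := by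
    have h := card_filter_add_card_filter_not (s := univ) (p := fun i : Fin n => x i = true)
    rw [card_univ, Fintype.card_fin] at h
    rw [upCount]
    omega
  rw [walkWt, prod_ite, prod_const, prod_const, hdown, upCount]

lemma walkPos_self {n : ℕ} (x : Fin n → Bool) : walkPos x n = 2 * (upCount x : ℤ) - n := by
  have hstep (i : Fin n) :
      (if x i then (1 : ℤ) else -1) = 2 * (if x i = true then 1 else 0) - 1 := by
    cases x i <;> simp
  simp only [walkPos, Fin.is_lt, if_true, hstep, sum_sub_distrib, ← mul_sum, sum_boole, upCount]
  simp

lemma walkPos_succ {n : ℕ} (x : Fin n → Bool) {m : ℕ} (hm : m < n) :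
    walkPos x (m + 1) = walkPos x m + if x ⟨m, hm⟩ then 1 else -1 := by
  have hstep : (if x ⟨m, hm⟩ then 1 else -1) =
      ∑ i : Fin n, if i = ⟨m, hm⟩ then (if x i then (1 : ℤ) else -1) else 0 := by
    simp
  rw [walkPos, walkPos, hstep, ← sum_add_distrib]
  refine sum_congr rfl fun i _ => ?_
  by_cases h₁ : (i : ℕ) < m <;> by_cases h₂ : (i : ℕ) = m <;>
    simp [Fin.ext_iff, h₁, h₂] <;> intro <;> omega

lemma walkPos_append {a b : ℕ} (x : Fin a → Bool) (y : Fin b → Bool) (j : ℕ) :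
    walkPos (Fin.append x y) (a + j) = walkPos x a + walkPos y j := by
  simp [walkPos, Fin.sum_univ_add, fun i : Fin a => Nat.lt_add_right j i.is_lt]

lemma walkPos_append_of_le {a b : ℕ} (x : Fin a → Bool) (y : Fin b → Bool) {m : ℕ}
    (hm : m ≤ a) :
    walkPos (Fin.append x y) m = walkPos x m := by
  have hsuffix (i : Fin b) : ¬a + (i : ℕ) < m := by omega
  simp [walkPos, Fin.sum_univ_add, hsuffix]

lemma walkWt_append {a b : ℕ} (p : ℝ) (x : Fin a → Bool) (y : Fin b → Bool) :
    walkWt p (Fin.append x y) = walkWt p x * walkWt p y := by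
  simp [walkWt, Fin.prod_univ_add]

lemma sum_walkWt (p : ℝ) (n : ℕ) : ∑ x : Fin n → Bool, walkWt p x = 1 := by
  calc ∑ x : Fin n → Bool, walkWt p x = (∑ b : Bool, if b then p else 1 - p) ^ n :=
        (Fintype.sum_pow (fun b : Bool => if b then p else 1 - p) n).symm
    _ = 1 := by simp

lemma walkPos_not {n : ℕ} (x : Fin n → Bool) (m : ℕ) :
    walkPos (fun i => !x i) m = -walkPos x m := by
  rw [walkPos, walkPos, ← sum_neg_distrib]
  refine sum_congr rfl fun i _ => ?_
  by_cases hi : (i : ℕ) < m <;> cases x i <;> simp [hi]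

lemma involutive_pointwise_not {n : ℕ} :
    Function.Involutive fun (x : Fin n → Bool) i => !x i :=
  fun x => by simp

lemma walkWt_not {n : ℕ} (p : ℝ) (x : Fin n → Bool) :
    walkWt p (fun i => !x i) = walkWt (1 - p) x := by
  refine prod_congr rfl fun i _ => ?_
  cases h : x i <;> simp [h]

lemma sum_fin_append {α M : Type*} [Fintype α] [AddCommMonoid M] {a b : ℕ}
    (F : (Fin (a + b) → α) → M) : ∑ z, F z = ∑ x, ∑ y, F (Fin.append x y) := by
  rw [← (Fin.appendEquiv a b).sum_comp, Fintype.sum_prod_type]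
  rfl

lemma Survives.mono {n k t t' : ℕ} {x : Fin n → Bool} (h : Survives k t' x) (ht : t ≤ t') :
    Survives k t x :=
  fun m hm => h m (hm.trans ht)

lemma survives_append_iff {a b k : ℕ} (x : Fin a → Bool) (y : Fin b → Bool) :
    Survives k a (Fin.append x y) ↔ Survives k a x :=
  forall₂_congr fun m hm => by rw [walkPos_append_of_le x y hm]

lemma survives_not_iff {n k t : ℕ} (x : Fin n → Bool) :
    Survives k t (fun i => !x i) ↔ Survives k t x := by
  simp only [Survives, walkPos_not, abs_neg]

lemma survives_succ_iff {n k t : ℕ} (x : Fin n → Bool) :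
    Survives k (t + 1) x ↔ Survives k t x ∧ |walkPos x (t + 1)| < k := by
  refine ⟨fun h => ⟨h.mono t.le_succ, h _ le_rfl⟩, fun ⟨h, hlast⟩ m hm => ?_⟩
  rcases Nat.le_succ_iff.1 hm with hm | rfl
  exacts [h m hm, hlast]

lemma walkWt_nonneg {n : ℕ} {p : ℝ} (hp₀ : 0 ≤ p) (hp₁ : p ≤ 1) (x : Fin n → Bool) :
    0 ≤ walkWt p x :=
  prod_nonneg fun i _ => by split_ifs <;> linarith

lemma tailT_nonneg {p : ℝ} (hp₀ : 0 ≤ p) (hp₁ : p ≤ 1) (k n : ℕ) : 0 ≤ tailT p k n :=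
  sum_nonneg fun x _ => by split_ifs <;> simp [walkWt_nonneg hp₀ hp₁]

lemma tailT_le_one {p : ℝ} (hp₀ : 0 ≤ p) (hp₁ : p ≤ 1) (k n : ℕ) : tailT p k n ≤ 1 :=
  (sum_le_sum fun x _ => by split_ifs <;> simp [walkWt_nonneg hp₀ hp₁]).trans_eq
    (sum_walkWt p n)

lemma tailT_zero (p : ℝ) {k : ℕ} (hk : 0 < k) : tailT p k 0 = 1 := by
  simp [tailT, walkPos, walkWt, hk]

lemma tailT_one_sub (p : ℝ) (k n : ℕ) : tailT (1 - p) k n = tailT p k n := by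
  simp only [tailT_eq]
  refine Fintype.sum_equiv (Function.Involutive.toPerm _ involutive_pointwise_not) _ _ fun x => ?_
  simp [survives_not_iff, walkWt_not]

/-- Survival up to time `a` is a cylinder event, so it has the same probability on longer paths. -/
lemma tailT_eq_sum_append (p : ℝ) (k a b : ℕ) :
    tailT p k a = ∑ z : Fin (a + b) → Bool, if Survives k a z then walkWt p z else 0 := by
  calc tailT p k a = ∑ x : Fin a → Bool, (if Survives k a x then walkWt p x else 0) *
        ∑ y : Fin b → Bool, walkWt p y := by simp [tailT_eq, sum_walkWt]
    _ = _ := by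
      simp_rw [sum_fin_append (a := a) (b := b), survives_append_iff, walkWt_append, mul_sum,
        ite_mul, zero_mul]

lemma sum_walkWt_ne_allUp (p : ℝ) (n : ℕ) :
    ∑ y : Fin n → Bool, (if y ≠ fun _ => true then walkWt p y else 0) = 1 - p ^ n := by
  rw [← sum_filter, filter_ne', sum_erase_eq_sub (mem_univ _), sum_walkWt]
  simp [walkWt]

lemma not_survives_append_allUp {a k : ℕ} (x : Fin a → Bool) :
    ¬Survives k (a + (2 * k - 1)) (Fin.append x fun _ : Fin (2 * k - 1) => true) := by
  intro h
  have hstart := h a (Nat.le_add_right _ _)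
  have hend := h (a + (2 * k - 1)) le_rfl
  rw [walkPos_append_of_le _ _ le_rfl] at hstart
  have hup : walkPos (fun _ : Fin (2 * k - 1) => true) (2 * k - 1) = (2 * k - 1 : ℕ) := by
    simp [walkPos]
  rw [walkPos_append, hup] at hend
  rw [abs_lt] at hstart hend
  omega

/-- A run of `2k - 1` up-steps leaves `(-k, k)` from any point inside it. -/
lemma tailT_add_le {p : ℝ} (hp₀ : 0 ≤ p) (hp₁ : p ≤ 1) (k a : ℕ) :
    tailT p k (a + (2 * k - 1)) ≤ (1 - p ^ (2 * k - 1)) * tailT p k a := by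
  have hpointwise (x : Fin a → Bool) (y : Fin (2 * k - 1) → Bool) :
      (if Survives k (a + (2 * k - 1)) (Fin.append x y) then walkWt p (Fin.append x y) else 0) ≤
        (if Survives k a x then walkWt p x else 0) *
          if y ≠ fun _ => true then walkWt p y else 0 := by
    by_cases hS : Survives k (a + (2 * k - 1)) (Fin.append x y)
    · have hy : y ≠ fun _ => true := by
        rintro rfl
        exact not_survives_append_allUp x hS
      rw [if_pos hS, if_pos ((survives_append_iff x y).1 (hS.mono (Nat.le_add_right _ _))),
        if_pos hy, walkWt_append]
    · rw [if_neg hS]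
      apply mul_nonneg <;> split_ifs <;> simp [walkWt_nonneg hp₀ hp₁]
  calc tailT p k (a + (2 * k - 1))
      = ∑ x : Fin a → Bool, ∑ y : Fin (2 * k - 1) → Bool,
          if Survives k (a + (2 * k - 1)) (Fin.append x y) then walkWt p (Fin.append x y) else 0 :=
        by rw [tailT_eq, sum_fin_append]
    _ ≤ ∑ x : Fin a → Bool, ∑ y : Fin (2 * k - 1) → Bool,
          (if Survives k a x then walkWt p x else 0) *
            if y ≠ fun _ => true then walkWt p y else 0 :=
        sum_le_sum fun x _ => sum_le_sum fun y _ => hpointwise x y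
    _ = (1 - p ^ (2 * k - 1)) * tailT p k a := by
      rw [← Fintype.sum_mul_sum, sum_walkWt_ne_allUp, mul_comm, tailT_eq]

lemma tailT_add_mul_le {p : ℝ} (hp₀ : 0 ≤ p) (hp₁ : p ≤ 1) (k a j : ℕ) :
    tailT p k (a + j * (2 * k - 1)) ≤ (1 - p ^ (2 * k - 1)) ^ j := by
  induction j with
  | zero => simpa using tailT_le_one hp₀ hp₁ k a
  | succ j ih =>
    have hr : 0 ≤ 1 - p ^ (2 * k - 1) := sub_nonneg.2 (pow_le_one₀ hp₀ hp₁)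
    calc tailT p k (a + (j + 1) * (2 * k - 1))
        = tailT p k (a + j * (2 * k - 1) + (2 * k - 1)) := by rw [add_mul, one_mul, add_assoc]
      _ ≤ (1 - p ^ (2 * k - 1)) * tailT p k (a + j * (2 * k - 1)) := tailT_add_le hp₀ hp₁ k _
      _ ≤ (1 - p ^ (2 * k - 1)) ^ (j + 1) := by
        rw [pow_succ']
        exact mul_le_mul_of_nonneg_left ih hr

lemma tendsto_tailT_atTop {p : ℝ} (hp₀ : 0 ≤ p) (hp₁ : p ≤ 1) {k : ℕ} (hk : 0 < k) :
    Tendsto (tailT p k) atTop (𝓝 0) := by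
  wlog hp : 0 < p generalizing p
  · obtain rfl : p = 0 := by linarith
    have h := this zero_le_one le_rfl one_pos
    rwa [← sub_zero (1 : ℝ), funext (tailT_one_sub 0 k)] at h
  have hK : 2 * k - 1 ≠ 0 := by omega
  have hdecay : Tendsto (fun n => (1 - p ^ (2 * k - 1)) ^ (n / (2 * k - 1))) atTop (𝓝 0) :=
    (tendsto_pow_atTop_nhds_zero_of_lt_one (sub_nonneg.2 (pow_le_one₀ hp₀ hp₁))
      (sub_lt_self 1 (pow_pos hp _))).comp (Nat.tendsto_div_const_atTop hK)
  refine squeeze_zero (tailT_nonneg hp₀ hp₁ k) (fun n => ?_) hdecay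
  have h := tailT_add_mul_le hp₀ hp₁ k (n % (2 * k - 1)) (n / (2 * k - 1))
  rwa [Nat.mod_add_div'] at h

lemma walkPos_eq_or_of_exit {k m : ℕ} {x : Fin (m + 1) → Bool} (hm : Survives k m x)
    (hexit : ¬Survives k (m + 1) x) : walkPos x (m + 1) = k ∨ walkPos x (m + 1) = -k := by
  rw [survives_succ_iff, not_and, not_lt] at hexit
  have hlast := hexit hm
  have hprev := abs_lt.1 (hm m le_rfl)
  rw [walkPos_succ x m.lt_succ_self] at hlast ⊢
  rw [le_abs] at hlast
  split_ifs at hlast ⊢ <;> omega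

def exitPaths (k m : ℕ) (s : ℤ) : Finset (Fin (m + 1) → Bool) :=
  {x | Survives k m x ∧ walkPos x (m + 1) = s}

lemma card_exitPaths_neg (k m : ℕ) (s : ℤ) : #(exitPaths k m (-s)) = #(exitPaths k m s) :=
  card_equiv (Function.Involutive.toPerm _ involutive_pointwise_not) fun x => by
    simp [exitPaths, survives_not_iff, walkPos_not, neg_eq_iff_eq_neg]

lemma sum_walkWt_exitPaths (p : ℝ) (k m : ℕ) :
    ∑ x ∈ exitPaths k m k, walkWt p x =
      #(exitPaths k m k) * (p ^ ((m + 1 - k) / 2 + k) * (1 - p) ^ ((m + 1 - k) / 2)) := by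
  rw [← nsmul_eq_mul, ← sum_const]
  refine sum_congr rfl fun x hx => ?_
  have hpos := (mem_filter.1 hx).2.2
  have hups := walkPos_self x
  have := upCount_le x
  rw [walkWt_eq_pow_mul_pow]
  congr 2 <;> omega

lemma sum_walkWt_exitPaths_neg (p : ℝ) (k m : ℕ) :
    ∑ x ∈ exitPaths k m (-k), walkWt p x =
      #(exitPaths k m k) * (p ^ ((m + 1 - k) / 2) * (1 - p) ^ ((m + 1 - k) / 2 + k)) := by
  rw [← card_exitPaths_neg, ← nsmul_eq_mul, ← sum_const]
  refine sum_congr rfl fun x hx => ?_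
  have hneg := (mem_filter.1 hx).2.2
  have hups := walkPos_self x
  have := upCount_le x
  rw [walkWt_eq_pow_mul_pow]
  congr 2 <;> omega

/-- Exits through `k` and through `-k` at step `m + 1` are equinumerous by reflection, and such a
path makes `(m + 1 - k) / 2 + k` steps towards its exit side and `(m + 1 - k) / 2` away from it. -/
lemma tailT_sub_tailT_succ (p : ℝ) {k : ℕ} (hk : 0 < k) (m : ℕ) :
    tailT p k m - tailT p k (m + 1) =
      #(exitPaths k m k) * (p * (1 - p)) ^ ((m + 1 - k) / 2) * (p ^ k + (1 - p) ^ k) := by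
  have hexit (x : Fin (m + 1) → Bool) :
      (Survives k m x ∧ ¬Survives k (m + 1) x) ↔
        x ∈ exitPaths k m k ∪ exitPaths k m (-k) := by
    simp only [exitPaths, mem_union, mem_filter, mem_univ, true_and]
    constructor
    · rintro ⟨hm, hexit⟩
      exact (walkPos_eq_or_of_exit hm hexit).imp (⟨hm, ·⟩) (⟨hm, ·⟩)
    · rintro (⟨hm, hpos⟩ | ⟨hm, hpos⟩) <;> refine ⟨hm, fun hS => ?_⟩ <;>
        simpa [hpos] using hS (m + 1) le_rfl
  have hdisj : Disjoint (exitPaths k m k) (exitPaths k m (-k)) := by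
    rw [exitPaths, exitPaths, disjoint_filter]
    rintro x - ⟨-, hpos⟩ ⟨-, hneg⟩
    omega
  calc tailT p k m - tailT p k (m + 1)
      = ∑ x : Fin (m + 1) → Bool,
          if Survives k m x ∧ ¬Survives k (m + 1) x then walkWt p x else 0 := by
        rw [tailT_eq_sum_append p k m 1, tailT_eq, ← sum_sub_distrib]
        refine sum_congr rfl fun x _ => ?_
        by_cases h : Survives k (m + 1) x
        · simp [h, h.mono m.le_succ]
        · simp [h]
    _ = ∑ x ∈ exitPaths k m k ∪ exitPaths k m (-k), walkWt p x := by
        rw [← sum_filter]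
        exact sum_congr (by ext x; simp [hexit]) fun _ _ => rfl
    _ = _ := by
        rw [sum_union hdisj, sum_walkWt_exitPaths, sum_walkWt_exitPaths_neg, mul_pow]
        ring

lemma pow_mul_le_pow_mul_of_le {R : Type*} [CommSemiring R] [PartialOrder R] [IsOrderedRing R]
    {s t x y : R} {i j : ℕ} (hs : 0 ≤ s) (hst : s ≤ t) (hy : 0 ≤ y) (hij : i ≤ j)
    (h : s ^ i * x ≤ t ^ i * y) : s ^ j * x ≤ t ^ j * y := by
  obtain ⟨d, rfl⟩ := Nat.exists_eq_add_of_le hij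
  calc s ^ (i + d) * x = s ^ d * (s ^ i * x) := by ring
    _ ≤ s ^ d * (t ^ i * y) := mul_le_mul_of_nonneg_left h (pow_nonneg hs d)
    _ ≤ t ^ d * (t ^ i * y) :=
      mul_le_mul_of_nonneg_right (pow_le_pow_left₀ hs hst d)
        (mul_nonneg (pow_nonneg (hs.trans hst) i) hy)
    _ = t ^ (i + d) * y := by ring

/-- If the decrements of `C` exceed those of `A` at no index below `n`, compare the heads of the
two series of decrements; otherwise compare their tails, the tail of `A` being all of `A n`. -/
lemma le_of_single_crossing {A C : ℕ → ℝ} (h₀ : A 0 = C 0) (hA : Tendsto A atTop (𝓝 0))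
    (hC : ∀ n, 0 ≤ C n)
    (hcross : ∀ i j, i ≤ j → A i - A (i + 1) < C i - C (i + 1) →
      A j - A (j + 1) ≤ C j - C (j + 1)) (n : ℕ) : A n ≤ C n := by
  by_cases hearly : ∃ i < n, A i - A (i + 1) < C i - C (i + 1)
  · obtain ⟨i, hin, hi⟩ := hearly
    have htail (N : ℕ) (hN : n ≤ N) : A n - A N ≤ C n - C N := by
      induction N, hN using Nat.le_induction with
      | base => simp
      | succ N hnN ih => linarith [hcross i N (by omega) hi]
    have : A n - C n ≤ 0 :=
      ge_of_tendsto hA (eventually_atTop.2 ⟨n, fun N hN => by linarith [htail N hN, hC N]⟩)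
    linarith
  · push Not at hearly
    have hhead (N : ℕ) (hN : N ≤ n) : C 0 - C N ≤ A 0 - A N := by
      induction N with
      | zero => simp
      | succ N ih => linarith [hearly N (by omega), ih (by omega)]
    linarith [hhead n le_rfl]

lemma tailT_le_tailT_of_le_half {p q : ℝ} (hp : 0 ≤ p) (hpq : p ≤ q) (hq : q ≤ 1 / 2)
    {k : ℕ} (hk : 0 < k) (n : ℕ) : tailT p k n ≤ tailT q k n := by
  have hs : 0 ≤ p * (1 - p) := by nlinarith
  have hst : p * (1 - p) ≤ q * (1 - q) := by nlinarith
  have hy : 0 ≤ q ^ k + (1 - q) ^ k :=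
    add_nonneg (pow_nonneg (by linarith) k) (pow_nonneg (by linarith) k)
  refine le_of_single_crossing (by rw [tailT_zero p hk, tailT_zero q hk])
    (tendsto_tailT_atTop hp (by linarith) hk) (tailT_nonneg (by linarith) (by linarith) k)
    (fun i j hij hi => ?_) n
  rw [tailT_sub_tailT_succ p hk, tailT_sub_tailT_succ q hk] at hi ⊢
  simp only [mul_assoc] at hi ⊢
  exact mul_le_mul_of_nonneg_left (pow_mul_le_pow_mul_of_le hs hst hy
    (Nat.div_le_div_right (by omega)) (lt_of_mul_lt_mul_left hi (Nat.cast_nonneg _)).le)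
    (Nat.cast_nonneg _)

/-- For the Gambler's Ruin duration `T^{|k|}` (both players starting with `k`),
the tail probability `P(T^{|k|} > n)` is increasing in `p` on `[0, 1/2]` and
decreasing in `p` on `[1/2, 1]`. -/
theorem tailT_mono (k : ℕ) (hk : 0 < k) (n : ℕ) :
    (∀ p q : ℝ, 0 ≤ p → p ≤ q → q ≤ 1 / 2 → tailT p k n ≤ tailT q k n) ∧
    (∀ p q : ℝ, 1 / 2 ≤ p → p ≤ q → q ≤ 1 → tailT q k n ≤ tailT p k n) := by
  refine ⟨fun p q hp hpq hq => tailT_le_tailT_of_le_half hp hpq hq hk n,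
    fun p q hp hpq hq => ?_⟩
  rw [← tailT_one_sub q, ← tailT_one_sub p]
  exact tailT_le_tailT_of_le_half (by linarith) (by linarith) (by linarith) hk n
end
end

section
/- With u_i(p) defined by the recursion u_{k-1}(p) = 0 and u_i(p) = p(1-p)/(1 - u_{i+1}(p)) for 1 ≤ i ≤ k-2, each u_i(p) for 1 ≤ i ≤ k-2 is strictly increasing in p on (0, 1/2) and strictly decreasing on (1/2, 1). -/
noncomputable section

def vRec : ℕ → ℝ → ℝ
  | 0, _ => 0
  | j + 1, p => p * (1 - p) / (1 - vRec j p)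

/-- `u_i(p)` for `1 ≤ i ≤ k-1`, defined by the backward recursion
`u_{k-1}(p) = 0`, `u_i(p) = p(1-p)/(1 - u_{i+1}(p))`. -/
def uRec (k i : ℕ) (p : ℝ) : ℝ := vRec (k - 1 - i) p

/-! `vRec j p` depends on `p` only through `x = p(1-p) ∈ [0, 1/4]`, as the finite continued
fraction `x / (1 - x / (1 - ⋯))`. On `[0, 1/4]` this continued fraction stays in `[0, 1/2]`, so
every denominator is at least `1/2`, and an induction shows it is strictly increasing in `x`.
Composing with `p ↦ p(1-p)`, increasing on `(0, 1/2)` and decreasing on `(1/2, 1)`, gives the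
theorem. -/

open Set

def contFrac : ℕ → ℝ → ℝ
  | 0, _ => 0
  | j + 1, x => x / (1 - contFrac j x)

theorem vRec_eq_contFrac (j : ℕ) (p : ℝ) : vRec j p = contFrac j (p * (1 - p)) := by
  induction j with
  | zero => rfl
  | succ j ih => simp only [vRec, contFrac, ih]

theorem contFrac_mem_Icc (j : ℕ) {x : ℝ} (hx : x ∈ Icc (0 : ℝ) (1 / 4)) :
    contFrac j x ∈ Icc (0 : ℝ) (1 / 2) := by
  induction j with
  | zero => simp [contFrac]
  | succ j ih =>
    obtain ⟨hx0, hx1⟩ := hx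
    obtain ⟨_, hc⟩ := ih
    have hden : 1 / 2 ≤ 1 - contFrac j x := by linarith
    refine ⟨div_nonneg hx0 (by linarith), ?_⟩
    calc x / (1 - contFrac j x) ≤ (1 / 4) / (1 / 2) :=
          div_le_div₀ (by norm_num) hx1 (by norm_num) hden
      _ = 1 / 2 := by norm_num

theorem strictMonoOn_contFrac_succ {j : ℕ} (hj : MonotoneOn (contFrac j) (Icc 0 (1 / 4))) :
    StrictMonoOn (contFrac (j + 1)) (Icc 0 (1 / 4)) := by
  intro x hx y hy hxy
  have hcy := contFrac_mem_Icc j hy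
  have hden : 0 < 1 - contFrac j y := by linarith [hcy.2]
  calc x / (1 - contFrac j x) ≤ x / (1 - contFrac j y) :=
        div_le_div_of_nonneg_left hx.1 hden (by linarith [hj hx hy hxy.le])
    _ < y / (1 - contFrac j y) := div_lt_div_of_pos_right hxy hden

theorem monotoneOn_contFrac (j : ℕ) : MonotoneOn (contFrac j) (Icc 0 (1 / 4)) := by
  induction j with
  | zero => exact fun _ _ _ _ _ ↦ le_rfl
  | succ j ih => exact (strictMonoOn_contFrac_succ ih).monotoneOn

theorem mapsTo_mul_one_sub : MapsTo (fun p : ℝ ↦ p * (1 - p)) (Icc 0 1) (Icc 0 (1 / 4)) :=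
  fun p ⟨hp0, hp1⟩ ↦ ⟨mul_nonneg hp0 (by linarith), by nlinarith [sq_nonneg (p - 1 / 2)]⟩

theorem strictMonoOn_mul_one_sub : StrictMonoOn (fun p : ℝ ↦ p * (1 - p)) (Iic (1 / 2)) := by
  intro p _ q (hq : q ≤ 1 / 2) hpq
  nlinarith

theorem strictAntiOn_mul_one_sub : StrictAntiOn (fun p : ℝ ↦ p * (1 - p)) (Ici (1 / 2)) := by
  intro p (hp : 1 / 2 ≤ p) q _ hpq
  nlinarith

theorem uRec_strictMono_general (k : ℕ) (i : ℕ) (h1 : 1 ≤ i) (h2 : i ≤ k - 2) :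
    StrictMonoOn (uRec k i) (Set.Ioo (0 : ℝ) (1 / 2)) ∧
    StrictAntiOn (uRec k i) (Set.Ioo (1 / 2 : ℝ) 1) := by
  obtain ⟨j, hj⟩ : ∃ j, k - 1 - i = j + 1 := ⟨k - 2 - i, by omega⟩
  have hu : uRec k i = contFrac (j + 1) ∘ fun p ↦ p * (1 - p) := by
    funext p
    rw [uRec, hj, vRec_eq_contFrac, Function.comp_apply]
  have hcf := strictMonoOn_contFrac_succ (monotoneOn_contFrac j)
  rw [hu]
  constructor
  · exact hcf.comp (strictMonoOn_mul_one_sub.mono fun p hp ↦ hp.2.le)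
      (mapsTo_mul_one_sub.mono_left fun p hp ↦ ⟨hp.1.le, by linarith [hp.2]⟩)
  · exact hcf.comp_strictAntiOn (strictAntiOn_mul_one_sub.mono fun p hp ↦ hp.1.le)
      (mapsTo_mul_one_sub.mono_left fun p hp ↦ ⟨by linarith [hp.1], hp.2.le⟩)

/-- For `1 ≤ i ≤ k-2`, `u_i(p)` is strictly increasing on `(0, 1/2)` and
strictly decreasing on `(1/2, 1)`. -/
theorem uRec_strictMono (k : ℕ) (hk : 3 ≤ k) (i : ℕ) (h1 : 1 ≤ i) (h2 : i ≤ k - 2) :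
    StrictMonoOn (uRec k i) (Set.Ioo (0 : ℝ) (1 / 2)) ∧
    StrictAntiOn (uRec k i) (Set.Ioo (1 / 2 : ℝ) 1) :=
  uRec_strictMono_general k i h1 h2
end
end

section
/- For p ∈ [0, 1/2] and positive integers y and d, the function g(p) = π_y^+(p)(1 - π_d^+(p)) + (1 - π_y^+(p)) π_d^+(p), where π_m^+(p) = p^m/(p^m + (1-p)^m), is nondecreasing in p on (0, 1/2]. Equivalently, r(p) = π_y^+(p) π_d^+(p) + (1-π_y^+(p))(1-π_d^+(p)) is nonincreasing on (0, 1/2]. -/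
/-!
Writing `u = π_y⁺(p)` and `v = π_d⁺(p)`, one has `g = 1/2 - 2 (1/2 - u) (1/2 - v)` and `r = 1 - g`.
Both `π_m⁺` are nondecreasing on `[0, 1]` and at most `1/2` on `[0, 1/2]`, so on `(0, 1/2]` the two
factors are nonnegative and nonincreasing, hence so is their product.
-/

noncomputable section

/-- `π_m^+(p) = p^m / (p^m + (1-p)^m)`. -/
def piPlus (m : ℕ) (p : ℝ) : ℝ := p ^ m / (p ^ m + (1 - p) ^ m)

lemma mul_one_sub_add_one_sub_mul_le {u u' v v' : ℝ} (hu : u ≤ u') (hv : v ≤ v')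
    (hu' : u' ≤ 1 / 2) (hv' : v' ≤ 1 / 2) :
    u * (1 - v) + (1 - u) * v ≤ u' * (1 - v') + (1 - u') * v' := by
  have hprod : (1 / 2 - u') * (1 / 2 - v') ≤ (1 / 2 - u) * (1 / 2 - v) :=
    mul_le_mul (by linarith) (by linarith) (by linarith) (by linarith)
  linarith

lemma pow_add_one_sub_pow_pos (m : ℕ) {p : ℝ} (hp₀ : 0 ≤ p) (hp₁ : p ≤ 1) :
    0 < p ^ m + (1 - p) ^ m := by
  rcases hp₀.eq_or_lt with rfl | hp
  · simp only [sub_zero, one_pow]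
    positivity
  · exact add_pos_of_pos_of_nonneg (pow_pos hp m) (pow_nonneg (by linarith) m)

lemma piPlus_monotoneOn (m : ℕ) : MonotoneOn (piPlus m) (Set.Icc 0 1) := by
  rintro p ⟨hp₀, hp₁⟩ q ⟨hq₀, hq₁⟩ hpq
  have hcross : (p * (1 - q)) ^ m ≤ (q * (1 - p)) ^ m :=
    pow_le_pow_left₀ (mul_nonneg hp₀ (by linarith)) (by nlinarith) m
  rw [mul_pow, mul_pow] at hcross
  unfold piPlus
  rw [div_le_div_iff₀ (pow_add_one_sub_pow_pos m hp₀ hp₁) (pow_add_one_sub_pow_pos m hq₀ hq₁)]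
  linarith

lemma piPlus_le_half (m : ℕ) {p : ℝ} (hp₀ : 0 ≤ p) (hp : p ≤ 1 / 2) : piPlus m p ≤ 1 / 2 := by
  have hpow : p ^ m ≤ (1 - p) ^ m := pow_le_pow_left₀ hp₀ (by linarith) m
  unfold piPlus
  rw [div_le_iff₀ (pow_add_one_sub_pow_pos m hp₀ (by linarith))]
  linarith

theorem mixture_monotone_general (y d : ℕ) :
    MonotoneOn (fun p => piPlus y p * (1 - piPlus d p) + (1 - piPlus y p) * piPlus d p)
      (Set.Ioc (0 : ℝ) (1 / 2)) ∧
    AntitoneOn (fun p => piPlus y p * piPlus d p + (1 - piPlus y p) * (1 - piPlus d p))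
      (Set.Ioc (0 : ℝ) (1 / 2)) := by
  have hsub : Set.Ioc (0 : ℝ) (1 / 2) ⊆ Set.Icc 0 1 :=
    Set.Ioc_subset_Icc_self.trans (Set.Icc_subset_Icc_right (by norm_num))
  have hg : MonotoneOn (fun p => piPlus y p * (1 - piPlus d p) + (1 - piPlus y p) * piPlus d p)
      (Set.Ioc (0 : ℝ) (1 / 2)) := by
    intro p hp q hq hpq
    exact mul_one_sub_add_one_sub_mul_le
      ((piPlus_monotoneOn y).mono hsub hp hq hpq) ((piPlus_monotoneOn d).mono hsub hp hq hpq)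
      (piPlus_le_half y hq.1.le hq.2) (piPlus_le_half d hq.1.le hq.2)
  refine ⟨hg, fun p hp q hq hpq => ?_⟩
  have hgpq := hg hp hq hpq
  simp only at hgpq ⊢
  linarith

/-- `g(p) = π_y⁺(p)(1 - π_d⁺(p)) + (1 - π_y⁺(p))π_d⁺(p)` is nondecreasing on
`(0, 1/2]`; equivalently `r(p) = π_y⁺(p)π_d⁺(p) + (1-π_y⁺(p))(1-π_d⁺(p))`
is nonincreasing on `(0, 1/2]`. -/
theorem mixture_monotone (y d : ℕ) (hy : 0 < y) (hd : 0 < d) :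
    MonotoneOn (fun p => piPlus y p * (1 - piPlus d p) + (1 - piPlus y p) * piPlus d p)
      (Set.Ioc (0 : ℝ) (1 / 2)) ∧
    AntitoneOn (fun p => piPlus y p * piPlus d p + (1 - piPlus y p) * (1 - piPlus d p))
      (Set.Ioc (0 : ℝ) (1 / 2)) :=
  mixture_monotone_general y d
end
end

section
/- The derivative with respect to p of the expression [p^{(n+k)/2}(1-p)^{(n-k)/2} + p^{(n-k)/2}(1-p)^{(n+k)/2}] has the same sign as n(1-2p)(p^k + (1-p)^k) + k(p^k - (1-p)^k) for p ∈ (0,1). -/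
/-!
With `a = (n + k) / 2 = b + k` and `b = (n - k) / 2`, the logarithmic derivative of `q ^ a (1 - q) ^ b`
gives `q (1 - q) · d/dq [q ^ a (1 - q) ^ b] = q ^ a (1 - q) ^ b (a - n q)`. Adding the same identity with
`a` and `b` swapped and factoring out `p ^ b (1 - p) ^ b / 2` leaves exactly
`n (1 - 2p)(p ^ k + (1 - p) ^ k) + k (p ^ k - (1 - p) ^ k)`.
-/

lemma mul_natCast_mul_pow_sub_one {R : Type*} [CommSemiring R] (x : R) (a : ℕ) :
    x * (a * x ^ (a - 1)) = a * x ^ a := by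
  rcases eq_or_ne a 0 with rfl | ha
  · simp
  · rw [mul_left_comm, mul_pow_sub_one ha]

lemma hasDerivAt_pow_mul_one_sub_pow (a b : ℕ) (q : ℝ) :
    HasDerivAt (fun x : ℝ => x ^ a * (1 - x) ^ b)
      (a * q ^ (a - 1) * (1 - q) ^ b - q ^ a * (b * (1 - q) ^ (b - 1))) q := by
  have h1 : HasDerivAt (fun x : ℝ => (1 - x) ^ b) (b * (1 - q) ^ (b - 1) * -1) q :=
    ((hasDerivAt_id q).const_sub 1).pow b
  exact ((hasDerivAt_pow a q).mul h1).congr_deriv (by ring)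

lemma mul_one_sub_mul_deriv_pow_mul_one_sub_pow (a b : ℕ) (q : ℝ) :
    q * (1 - q) * deriv (fun x : ℝ => x ^ a * (1 - x) ^ b) q =
      q ^ a * (1 - q) ^ b * (a - (a + b) * q) := by
  rw [(hasDerivAt_pow_mul_one_sub_pow a b q).deriv]
  have hq := mul_natCast_mul_pow_sub_one q a
  have h1q := mul_natCast_mul_pow_sub_one (1 - q) b
  linear_combination (1 - q) ^ b * (1 - q) * hq - q ^ a * q * h1q

theorem deriv_same_sign_general (n k : ℕ) (hkn : k ≤ n) (hpar : Even (n - k))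
    (p : ℝ) (hp : 0 < p) (hp1 : p < 1) :
    ∃ c : ℝ, 0 < c ∧
      deriv (fun q : ℝ =>
          q ^ ((n + k) / 2) * (1 - q) ^ ((n - k) / 2) +
            q ^ ((n - k) / 2) * (1 - q) ^ ((n + k) / 2)) p =
        c * ((n : ℝ) * (1 - 2 * p) * (p ^ k + (1 - p) ^ k) +
          (k : ℝ) * (p ^ k - (1 - p) ^ k)) := by
  obtain ⟨b, hb⟩ := hpar
  rw [show (n + k) / 2 = b + k by omega, show (n - k) / 2 = b by omega]
  have hn : (n : ℝ) = b + k + b := by exact_mod_cast (by omega : n = b + k + b)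
  have hp1' : 0 < 1 - p := sub_pos.mpr hp1
  refine ⟨p ^ b * (1 - p) ^ b / (2 * (p * (1 - p))), by positivity, ?_⟩
  rw [deriv_fun_add (by fun_prop) (by fun_prop)]
  apply mul_left_cancel₀ (mul_pos hp hp1').ne'
  rw [mul_add, mul_one_sub_mul_deriv_pow_mul_one_sub_pow,
    mul_one_sub_mul_deriv_pow_mul_one_sub_pow, hn]
  field_simp
  push_cast
  ring

/-- The derivative with respect to `p` of
`p^{(n+k)/2}(1-p)^{(n-k)/2} + p^{(n-k)/2}(1-p)^{(n+k)/2}` has the same sign as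
`n(1-2p)(p^k + (1-p)^k) + k(p^k - (1-p)^k)` for `p ∈ (0, 1)`
(they agree up to a positive factor). -/
theorem deriv_same_sign (n k : ℕ) (hk : 0 < k) (hkn : k ≤ n) (hpar : Even (n - k))
    (p : ℝ) (hp : 0 < p) (hp1 : p < 1) :
    ∃ c : ℝ, 0 < c ∧
      deriv (fun q : ℝ =>
          q ^ ((n + k) / 2) * (1 - q) ^ ((n - k) / 2) +
            q ^ ((n - k) / 2) * (1 - q) ^ ((n + k) / 2)) p =
        c * ((n : ℝ) * (1 - 2 * p) * (p ^ k + (1 - p) ^ k) +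
          (k : ℝ) * (p ^ k - (1 - p) ^ k)) :=
  deriv_same_sign_general n k hkn hpar p hp hp1
end
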